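/- Let k ≥ 2 and let G_1, …, G_t be totally-ordered k-uniform pographs, where G_i has vertex set {1 < 2 < … < m_i}. For every integer n ≥ 1: every t-coloring of the k-chains of the Boolean lattice B_n contains a copy of G_i in color i for some i, if and only if every t-coloring of the k-chains of the chain C_{n+1} contains a copy of G_i in color i for some i. (Consequently BR^k(G_1,…,G_t) = CR^k(G_1,…,G_t) − 1.) -/

import Mathlib

/-!
A strictly monotone map `f : P → Q` transfers the arrow property from `P` to `Q`: pull a
colouring of the `k`-chains of `Q` back along `f`, find a monochromatic copy in `P`, and
push it forward with `f`. The rank map `s ↦ #s` embeds `B_n` into `C_{n+1}`, and a maximal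
chain `∅ ⊂ {0} ⊂ {0,1} ⊂ ⋯ ⊂ {0,…,n-1}` embeds `C_{n+1}` into `B_n`.
-/

/-- The arrow relation `P → (G_1, …, G_t)`, where `G i` is the totally ordered pograph on
`Fin (m i)` with edge set `E i`. -/
def RamseyArrows (P : Type*) [Preorder P] {k t : ℕ} {m : Fin t → ℕ}
    (E : ∀ i, Set (Fin k → Fin (m i))) : Prop :=
  ∀ c : (Fin k → P) → Fin t, ∃ (i : Fin t) (φ : Fin (m i) → P),
    StrictMono φ ∧ ∀ e ∈ E i, c (φ ∘ e) = i

theorem RamseyArrows.of_strictMono {P Q : Type*} [Preorder P] [Preorder Q] {k t : ℕ}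
    {m : Fin t → ℕ} {E : ∀ i, Set (Fin k → Fin (m i))} (hP : RamseyArrows P E)
    {f : P → Q} (hf : StrictMono f) : RamseyArrows Q E := by
  intro c
  obtain ⟨i, φ, hφ, hcopy⟩ := hP fun x => c (f ∘ x)
  exact ⟨i, f ∘ φ, hf.comp hφ, hcopy⟩

def Finset.rankFin {n : ℕ} (s : Finset (Fin n)) : Fin (n + 1) :=
  ⟨s.card, Nat.lt_succ_of_le (s.card_le_univ.trans_eq (Fintype.card_fin n))⟩

theorem Finset.rankFin_strictMono {n : ℕ} : StrictMono (Finset.rankFin (n := n)) :=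
  fun _ _ h => Fin.mk_lt_mk.2 (Finset.card_lt_card h)

def Fin.initialSegment {n : ℕ} (a : Fin (n + 1)) : Finset (Fin n) :=
  {x | x.castSucc < a}

theorem Fin.initialSegment_strictMono {n : ℕ} : StrictMono (Fin.initialSegment (n := n)) := by
  intro a b hab
  refine Finset.ssubset_iff_of_subset ?_ |>.2 ⟨a.castPred (Fin.ne_last_of_lt hab), ?_, ?_⟩
  · intro x hx
    simp only [Fin.initialSegment, Finset.mem_filter, Finset.mem_univ, true_and] at hx ⊢
    exact hx.trans hab
  · simpa [Fin.initialSegment] using hab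
  · simp [Fin.initialSegment]

theorem boolean_eq_chain_ramsey_totally_ordered_general
    (k t : ℕ)
    (m : Fin t → ℕ)
    (E : ∀ i, Set (Fin k → Fin (m i)))
    (n : ℕ) :
    (∀ c : (Fin k → Finset (Fin n)) → Fin t,
      ∃ (i : Fin t) (φ : Fin (m i) → Finset (Fin n)),
        StrictMono φ ∧ ∀ e ∈ E i, c (φ ∘ e) = i) ↔
    (∀ c : (Fin k → Fin (n + 1)) → Fin t,
      ∃ (i : Fin t) (φ : Fin (m i) → Fin (n + 1)),
        StrictMono φ ∧ ∀ e ∈ E i, c (φ ∘ e) = i) :=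
  ⟨fun h => RamseyArrows.of_strictMono (P := Finset (Fin n)) h Finset.rankFin_strictMono,
    fun h => RamseyArrows.of_strictMono (P := Fin (n + 1)) h Fin.initialSegment_strictMono⟩

/-- for totally-ordered `k`-uniform pographs `G i` (with vertex set
`Fin (m i)` in its linear order and edge set `E i` of strictly increasing
`k`-tuples), and every `n ≥ 1`: every `t`-coloring of the `k`-chains of the Boolean
lattice `B_n` contains a copy of `G i` in color `i` for some `i`, if and only if
every `t`-coloring of the `k`-chains of the chain `C_{n+1}` does.
(Consequently `BR^k(G_1,…,G_t) = CR^k(G_1,…,G_t) − 1`.) -/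
theorem boolean_eq_chain_ramsey_totally_ordered
    (k t : ℕ) (hk : 2 ≤ k)
    (m : Fin t → ℕ)
    (E : ∀ i, Set (Fin k → Fin (m i))) (hE : ∀ i, ∀ e ∈ E i, StrictMono e)
    (n : ℕ) (hn : 1 ≤ n) :
    (∀ c : (Fin k → Finset (Fin n)) → Fin t,
      ∃ (i : Fin t) (φ : Fin (m i) → Finset (Fin n)),
        StrictMono φ ∧ ∀ e ∈ E i, c (φ ∘ e) = i) ↔
    (∀ c : (Fin k → Fin (n + 1)) → Fin t,
      ∃ (i : Fin t) (φ : Fin (m i) → Fin (n + 1)),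
        StrictMono φ ∧ ∀ e ∈ E i, c (φ ∘ e) = i) :=
  boolean_eq_chain_ramsey_totally_ordered_general k t m E n
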